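/- Let G satisfy the local doubling property with constant D_{τ,b}, and let A ∈ Aut(G) with κ_ρ/mod A ≤ τ. If a is an H¹_b atom (atom supported in a ball of radius at most b), then (1/D_{τ,b}) · (a ∘ A) is an H¹_{τb} atom. -/

import Mathlib

/-!
Take the new ball to be `B(A⁻¹x, τr)`. Since `A⁻¹` is `κ/mod A`-Lipschitz with `κ/mod A ≤ τ`,
it maps `B(x, r)` into `B(A⁻¹x, τr)`, and this contains the support of `a ∘ A`. Left invariance of
the metric and of `ν` gives `ν(B(A⁻¹x, r)) = ν(B(x, r))`, so local doubling yields
`ν(B(A⁻¹x, τr)) ≤ D ν(B(x, r))`, which is exactly what the factor `1/D` in the sup bound needs.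
The cancellation survives because `A` pushes `ν` forward to a multiple of `ν`.
-/

open MeasureTheory Metric ENNReal

theorem measure_ball_eq_of_dist_mul_left {G : Type*} [PseudoMetricSpace G] [Group G]
    [MeasurableSpace G] (hρ : ∀ g x y : G, dist (g * x) (g * y) = dist x y)
    (μ : Measure G) [μ.IsMulLeftInvariant]
    (y z : G) (r : ℝ) : μ (ball y r) = μ (ball z r) := by
  have : IsIsometricSMul G G := ⟨fun g => Isometry.of_dist_eq (hρ g)⟩
  rw [← measure_smul μ (z * y⁻¹), Metric.smul_ball, smul_eq_mul, inv_mul_cancel_right]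

theorem Equiv.preimage_ball_subset_ball_symm {α β : Type*} [PseudoMetricSpace α]
    [PseudoMetricSpace β] (e : α ≃ β) {K : NNReal} (hK : LipschitzWith K e.symm) {τ : ℝ}
    (hKτ : K ≤ τ) (hτ : 0 < τ) (x : β) (r : ℝ) :
    e ⁻¹' ball x r ⊆ ball (e.symm x) (τ * r) := by
  intro y (hy : dist (e y) x < r)
  calc dist y (e.symm x) = dist (e.symm (e y)) (e.symm x) := by rw [e.symm_apply_apply]
    _ ≤ K * dist (e y) x := hK.dist_le_mul _ _
    _ ≤ τ * dist (e y) x := by gcongr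
    _ < τ * r := by gcongr

theorem norm_inv_smul_le_of_le_ofReal_mul {E : Type*} [NormedAddCommGroup E] [NormedSpace ℝ E]
    {μ₁ μ₂ : ℝ≥0∞} {D : ℝ} (h₁ : μ₁ ≠ 0) (h : μ₁ ≤ ENNReal.ofReal D * μ₂) {z : E}
    (hz : ‖z‖ ≤ μ₂.toReal⁻¹) : ‖D⁻¹ • z‖ ≤ μ₁.toReal⁻¹ := by
  have hD : 0 < D := by
    by_contra! hD
    rw [ENNReal.ofReal_eq_zero.2 hD, zero_mul] at h
    exact h₁ (nonpos_iff_eq_zero.1 h)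
  calc ‖D⁻¹ • z‖ = D⁻¹ * ‖z‖ := by rw [norm_smul, Real.norm_of_nonneg (inv_nonneg.2 hD.le)]
    _ ≤ D⁻¹ * μ₂.toReal⁻¹ := by gcongr
    _ = (ENNReal.ofReal D * μ₂)⁻¹.toReal := by
      rw [toReal_inv, toReal_mul, toReal_ofReal hD.le, mul_inv]
    _ ≤ μ₁⁻¹.toReal := toReal_mono (inv_ne_top.2 h₁) (ENNReal.inv_le_inv.2 h)
    _ = μ₁.toReal⁻¹ := toReal_inv μ₁

theorem integral_comp_eq_zero_of_map_eq_smul {α β E : Type*} [MeasurableSpace α]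
    [MeasurableSpace β] [NormedAddCommGroup E] [NormedSpace ℝ E] {μ : Measure α} {ν : Measure β}
    (e : α ≃ᵐ β) {c : ℝ≥0∞} (hmap : μ.map e = c • ν) {f : β → E} (hf : ∫ y, f y ∂ν = 0) :
    ∫ x, f (e x) ∂μ = 0 := by
  rw [← integral_map_equiv, hmap, integral_smul_measure, hf, smul_zero]

theorem rescaled_composition_is_atom_general
    {G : Type*} [MetricSpace G] [Group G]
    [MeasurableSpace G] [BorelSpace G]
    (ν : Measure G) [ν.IsHaarMeasure]
    (hρ : ∀ g x y : G, dist (g * x) (g * y) = dist x y)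
    (τ b D : ℝ) (hτ2 : 2 ≤ τ)
    (hdoub : ∀ (y : G) (s : ℝ), 0 < s → s ≤ b →
      ν (Metric.ball y (τ * s)) ≤ ENNReal.ofReal D * ν (Metric.ball y s))
    (A : G ≃* G) (hA : Continuous A)
    (κ modA : ℝ)
    (hmod : Measure.map A ν = ENNReal.ofReal modA • ν)
    (hLip : LipschitzWith (Real.toNNReal (κ / modA)) A.symm)
    (hτ : κ / modA ≤ τ)
    (a : G → ℂ) (x : G) (r : ℝ) (hr : 0 < r) (hrb : r ≤ b)
    (hsupp : Function.support a ⊆ Metric.ball x r)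
    (hbound : ∀ y, ‖a y‖ ≤ ((ν (Metric.ball x r)).toReal)⁻¹)
    (hint : ∫ y, a y ∂ν = 0) :
    ∃ (x' : G) (r' : ℝ), 0 < r' ∧ r' ≤ τ * b ∧
      Function.support (fun y => D⁻¹ • a (A y)) ⊆ Metric.ball x' r' ∧
      (∀ y, ‖D⁻¹ • a (A y)‖ ≤ ((ν (Metric.ball x' r')).toReal)⁻¹) ∧
      ∫ y, D⁻¹ • a (A y) ∂ν = 0 := by
  have hτ0 : 0 < τ := by linarith
  have hdoub' : ν (ball (A.symm x) (τ * r)) ≤ ENNReal.ofReal D * ν (ball x r) := by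
    rw [← measure_ball_eq_of_dist_mul_left hρ ν (A.symm x) x r]
    exact hdoub _ r hr hrb
  refine ⟨A.symm x, τ * r, mul_pos hτ0 hr, by gcongr, ?_, fun y => ?_, ?_⟩
  · calc Function.support (fun y => D⁻¹ • a (A y))
        ⊆ A ⁻¹' Function.support a := Function.support_const_smul_subset D⁻¹ (a ∘ A)
      _ ⊆ A ⁻¹' ball x r := Set.preimage_mono hsupp
      _ ⊆ ball (A.symm x) (τ * r) :=
        A.toEquiv.preimage_ball_subset_ball_symm hLip
          (by rw [Real.coe_toNNReal']; exact max_le hτ hτ0.le) hτ0 x r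
  · exact norm_inv_smul_le_of_le_ofReal_mul (measure_ball_pos ν _ (mul_pos hτ0 hr)).ne' hdoub'
      (hbound (A y))
  · let e : G ≃ᵐ G := (Homeomorph.mk A.toEquiv hA hLip.continuous).toMeasurableEquiv
    rw [integral_smul, show ∫ y, a (A y) ∂ν = 0 from
      integral_comp_eq_zero_of_map_eq_smul e hmod hint, smul_zero]

/-- If `G` satisfies the local doubling inequality with constant
`D = D_{τ,b}` and `A ∈ Aut(G)` satisfies `κ_ρ / mod A ≤ τ`, then for every `H¹_b` atom `a`
the function `(1/D_{τ,b}) · (a ∘ A)` is an `H¹_{τb}` atom. -/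
theorem rescaled_composition_is_atom
    {G : Type*} [MetricSpace G] [Group G] [IsTopologicalGroup G] [LocallyCompactSpace G]
    [MeasurableSpace G] [BorelSpace G]
    (ν : Measure G) [ν.IsHaarMeasure]
    (hρ : ∀ g x y : G, dist (g * x) (g * y) = dist x y)
    (τ b D : ℝ) (hτ2 : 2 ≤ τ) (hb : 0 < b) (hD : 1 ≤ D)
    (hdoub : ∀ (y : G) (s : ℝ), 0 < s → s ≤ b →
      ν (Metric.ball y (τ * s)) ≤ ENNReal.ofReal D * ν (Metric.ball y s))
    (A : G ≃* G) (hA : Continuous A) (hA' : Continuous A.symm)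
    (κ modA : ℝ) (hκ : 0 < κ) (hmodA : 0 < modA)
    (hmod : Measure.map A ν = ENNReal.ofReal modA • ν)
    (hLip : LipschitzWith (Real.toNNReal (κ / modA)) A.symm)
    (hτ : κ / modA ≤ τ)
    (a : G → ℂ) (x : G) (r : ℝ) (hr : 0 < r) (hrb : r ≤ b)
    (hsupp : Function.support a ⊆ Metric.ball x r)
    (hbound : ∀ y, ‖a y‖ ≤ ((ν (Metric.ball x r)).toReal)⁻¹)
    (hint : ∫ y, a y ∂ν = 0) :
    ∃ (x' : G) (r' : ℝ), 0 < r' ∧ r' ≤ τ * b ∧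
      Function.support (fun y => D⁻¹ • a (A y)) ⊆ Metric.ball x' r' ∧
      (∀ y, ‖D⁻¹ • a (A y)‖ ≤ ((ν (Metric.ball x' r')).toReal)⁻¹) ∧
      ∫ y, D⁻¹ • a (A y) ∂ν = 0 :=
  rescaled_composition_is_atom_general ν hρ τ b D hτ2 hdoub A hA κ modA hmod hLip hτ a x r hr hrb
    hsupp hbound hint
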